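/- arXiv:2402.05806 — 2 statements merged into one kernel-verified Lean document; each statement's English description precedes it below -/
import Mathlib

section
/- Let $\mathbf{z} \in \mathbb{R}^C$ with $z_1 \geq \dots \geq z_C$, $L \in \{1,\dots,C\}$, and $T > \tilde T > 0$. If $L < C$ and not all entries of $\mathbf{z}$ are equal, then $\sum_{j=1}^L \sigma_j(\mathbf{z}/\tilde T) > \sum_{j=1}^L \sigma_j(\mathbf{z}/T)$ (the inequality is strict). -/
/-!
Split the classes into the top-`L` set `S` and its complement, with partition functions
`A(T) = ∑_{i ∈ S} exp (z_i / T)` and `B(T) = ∑_{j ∉ S} exp (z_j / T)`, so that the top-`L` mass is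
`A / (A + B)`. Expanding `A(T) B(T')` and `A(T') B(T)` as sums over pairs `(i, j) ∈ S × Sᶜ`, each
term of the first is at most the matching term of the second, because
`z_i / T' + z_j / T - (z_i / T + z_j / T') = (z_i - z_j) (1 / T' - 1 / T) ≥ 0` when `z_j ≤ z_i`;
the pair of the largest and the smallest logit makes it strict.
-/

noncomputable def softmax {C : ℕ} (z : Fin C → ℝ) (T : ℝ) (i : Fin C) : ℝ :=
  Real.exp (z i / T) / ∑ j, Real.exp (z j / T)

noncomputable def topSum {C : ℕ} (z : Fin C → ℝ) (T : ℝ) (L : ℕ) : ℝ :=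
  ∑ i ∈ Finset.univ.filter (fun i : Fin C => (i : ℕ) < L), softmax z T i

open Finset Real

theorem Antitone.apply_top_lt_apply_bot {α β : Type*} [Preorder α] [BoundedOrder α]
    [PartialOrder β] {f : α → β} (hf : Antitone f) (hne : ∃ a b, f a ≠ f b) : f ⊤ < f ⊥ := by
  refine (hf bot_le).lt_of_ne fun htb => ?_
  obtain ⟨a, b, hab⟩ := hne
  have hconst : ∀ c, f c = f ⊤ := fun c =>
    le_antisymm (htb ▸ hf bot_le) (hf le_top)
  exact hab ((hconst a).trans (hconst b).symm)

theorem div_add_lt_div_add_of_mul_lt {a b c d : ℝ} (ha : 0 < a) (hb : 0 < b) (hc : 0 < c)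
    (hd : 0 < d) (h : a * d < c * b) : a / (a + b) < c / (c + d) := by
  rw [div_lt_div_iff₀ (by positivity) (by positivity)]
  linarith

theorem sum_exp_div_mul_sum_exp_div_lt {ι : Type*} {P Q : Finset ι} {z : ι → ℝ} {T T' : ℝ}
    (hT' : 0 < T') (hTT : T' < T) (hPQ : ∀ i ∈ P, ∀ j ∈ Q, z j ≤ z i)
    (hlt : ∃ i ∈ P, ∃ j ∈ Q, z j < z i) :
    (∑ i ∈ P, exp (z i / T)) * ∑ j ∈ Q, exp (z j / T') <
      (∑ i ∈ P, exp (z i / T')) * ∑ j ∈ Q, exp (z j / T) := by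
  have hinv : T⁻¹ < T'⁻¹ := inv_strictAnti₀ hT' hTT
  have hgap : ∀ a b : ℝ, a / T' + b / T - (a / T + b / T') = (a - b) * (T'⁻¹ - T⁻¹) := by
    intro a b
    ring
  simp_rw [sum_mul_sum, ← sum_product', ← exp_add]
  obtain ⟨i₀, hi₀, j₀, hj₀, hij₀⟩ := hlt
  refine sum_lt_sum (fun ij hij => ?_) ⟨(i₀, j₀), mem_product.2 ⟨hi₀, hj₀⟩, ?_⟩
  · rw [mem_product] at hij
    have := hgap (z ij.1) (z ij.2)
    have := mul_nonneg (sub_nonneg.2 (hPQ _ hij.1 _ hij.2)) (sub_nonneg.2 hinv.le)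
    exact exp_le_exp.2 (by linarith)
  · have := hgap (z i₀) (z j₀)
    have := mul_pos (sub_pos.2 hij₀) (sub_pos.2 hinv)
    exact exp_lt_exp.2 (by linarith)

theorem sum_softmax_eq {C : ℕ} (z : Fin C → ℝ) (T : ℝ) (S : Finset (Fin C)) :
    ∑ i ∈ S, softmax z T i =
      (∑ i ∈ S, exp (z i / T)) / ((∑ i ∈ S, exp (z i / T)) + ∑ i ∈ Sᶜ, exp (z i / T)) := by
  rw [sum_add_sum_compl, sum_div]
  rfl

theorem sum_softmax_lt_sum_softmax {C : ℕ} {z : Fin C → ℝ} {S : Finset (Fin C)} {T T' : ℝ}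
    (hT' : 0 < T') (hTT : T' < T) (hsep : ∀ i ∈ S, ∀ j ∉ S, z j ≤ z i)
    (hlt : ∃ i ∈ S, ∃ j ∉ S, z j < z i) :
    ∑ i ∈ S, softmax z T i < ∑ i ∈ S, softmax z T' i := by
  obtain ⟨i₀, hi₀, j₀, hj₀, -⟩ := id hlt
  have hA (U : ℝ) : 0 < ∑ i ∈ S, exp (z i / U) := sum_pos (fun _ _ => exp_pos _) ⟨i₀, hi₀⟩
  have hB (U : ℝ) : 0 < ∑ i ∈ Sᶜ, exp (z i / U) :=
    sum_pos (fun _ _ => exp_pos _) ⟨j₀, mem_compl.2 hj₀⟩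
  rw [sum_softmax_eq, sum_softmax_eq]
  refine div_add_lt_div_add_of_mul_lt (hA T) (hB T) (hA T') (hB T')
    (sum_exp_div_mul_sum_exp_div_lt hT' hTT (fun i hi j hj => hsep i hi j (mem_compl.1 hj)) ?_)
  simpa only [mem_compl] using hlt

theorem stmt_2 {C : ℕ} (z : Fin C → ℝ) (hz : ∀ i j : Fin C, i ≤ j → z j ≤ z i)
    (L : ℕ) (hL1 : 1 ≤ L) (hLC : L < C) (hne : ∃ i j : Fin C, z i ≠ z j)
    (T T' : ℝ) (hTT : T > T') (hT' : T' > 0) :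
    topSum z T' L > topSum z T L := by
  have : NeZero C := ⟨by omega⟩
  set S := univ.filter (fun i : Fin C => (i : ℕ) < L)
  have hmem : ∀ i, i ∈ S ↔ (i : ℕ) < L := by simp [S]
  have hsep : ∀ i ∈ S, ∀ j ∉ S, z j ≤ z i := fun i hi j hj =>
    hz i j (Fin.le_def.2 (by rw [hmem] at hi hj; omega))
  refine sum_softmax_lt_sum_softmax hT' hTT hsep
    ⟨⊥, (hmem _).2 ?_, ⊤, fun h => ?_, Antitone.apply_top_lt_apply_bot hz hne⟩
  · rw [bot_eq_zero, Fin.val_zero]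
    omega
  · rw [hmem, Fin.val_top] at h
    omega
end

section
/- Let $\mathbf{z}\in\mathbb{R}^C$ with $z_1 \geq \dots \geq z_C$, $\Delta z = z_1 - z_2$, $0 < T < 1$, and $M \in \{1,\dots,C-1\}$. If $\Delta z > \max\left\{\frac{T}{T-1}\ln(T/4), \frac{T}{T+1}\ln\left(\frac{4(C-1)^2}{T}\right)\right\}$, then $\frac{\partial}{\partial z_1} g(\mathbf{z};T,M) > 0$, where $g(\mathbf{z};T,M) = \frac{\sum_{i=1}^M e^{z_i}}{\sum_{j=1}^C e^{z_j}} - \frac{\sum_{i=1}^M e^{z_i/T}}{\sum_{j=1}^C e^{z_j/T}}$. -/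
noncomputable def gap {C : ℕ} (z : Fin C → ℝ) (T : ℝ) (M : ℕ) : ℝ :=
  (∑ i ∈ Finset.univ.filter (fun i : Fin C => (i : ℕ) < M), Real.exp (z i)) /
      (∑ j, Real.exp (z j)) -
    (∑ i ∈ Finset.univ.filter (fun i : Fin C => (i : ℕ) < M), Real.exp (z i / T)) /
      (∑ j, Real.exp (z j / T))

/-! Raising `z₁` moves the top-`M` mass at temperature `T` at rate `e^{z₁/T} B_T / (T S_T²)`,
where `B_T` and `S_T` are the tempered masses of the classes outside the top `M` and of all
classes. Since every logit outside the top `M` is at most `z₂`, `B_T ≤ e^{(1/T - 1) z₂} B`;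
moreover `S_T ≥ e^{z₁/T}` and `S ≤ e^{z₁} (1 + u)` with `u = (C - 1) e^{-Δz}`. Against the rate
`e^{z₁} B / S²` at temperature `1` this leaves `(1 + u)² < T e^{(1/T - 1) Δz}`, and by
`(1 + u)² ≤ 2 + 2u²` each of the two thresholds on `Δz` pays for one half. -/

open Real Finset Function

section Update

variable {ι : Type*} [DecidableEq ι]

theorem hasDerivAt_exp_update_div (z : ι → ℝ) (i₀ i : ι) (T : ℝ) :
    HasDerivAt (fun x => exp (update z i₀ x i / T))
      (if i = i₀ then exp (z i₀ / T) / T else 0) (z i₀) := by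
  split_ifs with h
  · subst h
    simpa [div_eq_mul_inv, mul_comm] using ((hasDerivAt_id (z i)).div_const T).exp
  · simpa [update_of_ne h] using hasDerivAt_const (z i₀) (exp (z i / T))

theorem hasDerivAt_sum_exp_update_div {s : Finset ι} {i₀ : ι} (hi₀ : i₀ ∈ s) (z : ι → ℝ)
    (T : ℝ) :
    HasDerivAt (fun x => ∑ i ∈ s, exp (update z i₀ x i / T)) (exp (z i₀ / T) / T) (z i₀) := by
  simpa [sum_ite_eq', hi₀] using
    HasDerivAt.fun_sum fun i (_ : i ∈ s) => hasDerivAt_exp_update_div z i₀ i T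

end Update

section Softmax

variable {ι : Type*} [Fintype ι]

noncomputable def softmaxMass (s : Finset ι) (z : ι → ℝ) (T : ℝ) : ℝ :=
  (∑ i ∈ s, exp (z i / T)) / ∑ j, exp (z j / T)

variable [DecidableEq ι]

theorem hasDerivAt_softmaxMass_update {s : Finset ι} {i₀ : ι} (hi₀ : i₀ ∈ s) (z : ι → ℝ)
    (T : ℝ) :
    HasDerivAt (fun x => softmaxMass s (update z i₀ x) T)
      (exp (z i₀ / T) / T * (∑ i ∈ sᶜ, exp (z i / T)) / (∑ j, exp (z j / T)) ^ 2) (z i₀) := by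
  have hpos : 0 < ∑ j, exp (z j / T) := sum_pos (fun j _ => exp_pos _) ⟨i₀, mem_univ _⟩
  have h := (hasDerivAt_sum_exp_update_div hi₀ z T).fun_div
    (hasDerivAt_sum_exp_update_div (mem_univ i₀) z T) (by simpa using hpos.ne')
  rw [update_eq_self] at h
  refine h.congr_deriv ?_
  rw [← sum_add_sum_compl s fun i => exp (z i / T)]
  ring

end Softmax

theorem gap_eq_softmaxMass_sub {C : ℕ} (z : Fin C → ℝ) (T : ℝ) (M : ℕ) :
    gap z T M = softmaxMass (univ.filter fun i : Fin C => (i : ℕ) < M) z 1 -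
      softmaxMass (univ.filter fun i : Fin C => (i : ℕ) < M) z T := by
  simp only [gap, softmaxMass, div_one]

theorem sum_exp_div_le_exp_mul_sum_exp {ι : Type*} {s : Finset ι} {z : ι → ℝ} {y T : ℝ}
    (hT : 0 < T) (hT1 : T ≤ 1) (hz : ∀ i ∈ s, z i ≤ y) :
    ∑ i ∈ s, exp (z i / T) ≤ exp ((1 - T) / T * y) * ∑ i ∈ s, exp (z i) := by
  rw [mul_sum]
  refine sum_le_sum fun i hi => ?_
  rw [← exp_add, exp_le_exp]
  have hsplit : z i / T = (1 - T) / T * z i + z i := by field_simp; ring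
  rw [hsplit]
  linarith [mul_le_mul_of_nonneg_left (hz i hi) (div_nonneg (sub_nonneg.2 hT1) hT.le)]

theorem sum_exp_le_exp_add_card_mul {ι : Type*} [Fintype ι] [DecidableEq ι] {z : ι → ℝ}
    {i₀ : ι} {y : ℝ} (hz : ∀ i, i ≠ i₀ → z i ≤ y) :
    ∑ i, exp (z i) ≤ exp (z i₀) + ((Fintype.card ι : ℝ) - 1) * exp y := by
  rw [← add_sum_erase _ _ (mem_univ i₀)]
  gcongr
  calc ∑ i ∈ univ.erase i₀, exp (z i) ≤ #(univ.erase i₀) • exp y :=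
        sum_le_card_nsmul _ _ _ fun i hi => exp_le_exp.2 (hz i (ne_of_mem_erase hi))
    _ = ((Fintype.card ι : ℝ) - 1) * exp y := by
        rw [card_erase_of_mem (mem_univ i₀), card_univ, nsmul_eq_mul,
          Nat.cast_pred (Fintype.card_pos_iff.2 ⟨i₀⟩)]

theorem lt_mul_exp_of_div_mul_log_lt {T a K Δ : ℝ} (hT : 0 < T) (ha : 0 < a) (hK : 0 < K)
    (h : T / a * log (K / T) < Δ) : K < T * exp (a / T * Δ) := by
  have hlog : log (K / T) < a / T * Δ := by
    rw [div_mul_eq_mul_div, div_lt_iff₀ ha] at h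
    rw [div_mul_eq_mul_div, lt_div_iff₀ hT]
    linarith
  rw [log_lt_iff_lt_exp (div_pos hK hT), div_lt_iff₀ hT] at hlog
  linarith

theorem four_lt_mul_exp_of_lt {T Δ : ℝ} (hT0 : 0 < T) (hT1 : T < 1)
    (h : T / (T - 1) * log (T / 4) < Δ) : 4 < T * exp ((1 - T) / T * Δ) := by
  rw [← inv_div 4 T, log_inv, ← neg_sub 1 T, div_neg, neg_mul_neg] at h
  exact lt_mul_exp_of_div_mul_log_lt hT0 (by linarith) four_pos h

theorem exp_add_mul_exp_sq_lt {T x y K : ℝ} (hT : T ≠ 0)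
    (h1 : 4 < T * exp ((1 - T) / T * (x - y)))
    (h2 : 4 * K ^ 2 < T * exp ((T + 1) / T * (x - y))) :
    (exp x + K * exp y) ^ 2 < T * exp ((1 - T) / T * (x - y)) * exp x ^ 2 := by
  have hsum : exp x + K * exp y = exp x * (1 + K * exp (y - x)) := by
    rw [exp_sub]; field_simp
  set u := K * exp (y - x)
  have hu : 4 * u ^ 2 < T * exp ((1 - T) / T * (x - y)) := by
    have hexp : exp ((T + 1) / T * (x - y)) * exp (y - x) ^ 2 = exp ((1 - T) / T * (x - y)) := by
      rw [sq, ← exp_add, ← exp_add]; congr 1; field_simp; ring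
    calc 4 * u ^ 2 = 4 * K ^ 2 * exp (y - x) ^ 2 := by ring
      _ < T * exp ((T + 1) / T * (x - y)) * exp (y - x) ^ 2 := by gcongr
      _ = T * exp ((1 - T) / T * (x - y)) := by rw [mul_assoc, hexp]
  have hu1 : (1 + u) ^ 2 < T * exp ((1 - T) / T * (x - y)) := by
    nlinarith [sq_nonneg (1 - u)]
  rw [hsum, mul_pow, mul_comm]
  gcongr

theorem exp_div_mul_div_sq_lt {T x y K B BT S ST : ℝ} (hT : 0 < T) (hB : 0 < B) (hS : 0 < S)
    (hBT : BT ≤ exp ((1 - T) / T * y) * B) (hSle : S ≤ exp x + K * exp y)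
    (hST : exp (x / T) ≤ ST)
    (hkey : (exp x + K * exp y) ^ 2 < T * exp ((1 - T) / T * (x - y)) * exp x ^ 2) :
    exp (x / T) / T * BT / ST ^ 2 < exp x * B / S ^ 2 := by
  have hSTpos : 0 < ST := (exp_pos _).trans_le hST
  rw [div_lt_div_iff₀ (by positivity) (by positivity)]
  have hexp : exp (x / T) * exp ((1 - T) / T * y) * exp ((1 - T) / T * (x - y)) * exp x ^ 2 =
      exp x * exp (x / T) ^ 2 := by
    simp only [sq, ← exp_add]; congr 1; field_simp; ring
  calc exp (x / T) / T * BT * S ^ 2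
      ≤ exp (x / T) / T * (exp ((1 - T) / T * y) * B) * (exp x + K * exp y) ^ 2 := by
        gcongr
    _ < exp (x / T) / T * (exp ((1 - T) / T * y) * B) *
          (T * exp ((1 - T) / T * (x - y)) * exp x ^ 2) := by gcongr
    _ = B * (exp (x / T) * exp ((1 - T) / T * y) * exp ((1 - T) / T * (x - y)) * exp x ^ 2) := by
        field_simp
    _ = exp x * B * exp (x / T) ^ 2 := by rw [hexp]; ring
    _ ≤ exp x * B * ST ^ 2 := by gcongr

theorem stmt_10 {C : ℕ} (hC : 2 ≤ C) (z : Fin C → ℝ)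
    (hz : ∀ i j : Fin C, i ≤ j → z j ≤ z i)
    (T : ℝ) (hT0 : 0 < T) (hT1 : T < 1) (M : ℕ) (hM1 : 1 ≤ M) (hM : M ≤ C - 1)
    (hΔ : z ⟨0, by omega⟩ - z ⟨1, by omega⟩ >
      max (T / (T - 1) * Real.log (T / 4))
        (T / (T + 1) * Real.log (4 * ((C : ℝ) - 1) ^ 2 / T))) :
    deriv (fun x => gap (Function.update z ⟨0, by omega⟩ x) T M) (z ⟨0, by omega⟩) > 0 := by
  set i₀ : Fin C := ⟨0, by omega⟩
  set i₁ : Fin C := ⟨1, by omega⟩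
  set top := univ.filter fun i : Fin C => (i : ℕ) < M
  have hi₀ : i₀ ∈ top := by simp [top, i₀]; omega
  have hbot : topᶜ.Nonempty := ⟨⟨C - 1, by omega⟩, by simp [top]; omega⟩
  have hgap : (fun x => gap (update z i₀ x) T M) =
      fun x => softmaxMass top (update z i₀ x) 1 - softmaxMass top (update z i₀ x) T :=
    funext fun x => gap_eq_softmaxMass_sub _ T M
  have hderiv := (hasDerivAt_softmaxMass_update hi₀ z 1).fun_sub
    (hasDerivAt_softmaxMass_update hi₀ z T)
  simp only [div_one] at hderiv
  rw [hgap, hderiv.deriv, gt_iff_lt, sub_pos]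
  have hbot_le : ∀ i ∈ topᶜ, z i ≤ z i₁ := fun i hi => by
    simp only [top, mem_compl, mem_filter, mem_univ, true_and, not_lt] at hi
    exact hz i₁ i (Fin.le_def.2 (show 1 ≤ (i : ℕ) by omega))
  have hrest_le : ∀ i, i ≠ i₀ → z i ≤ z i₁ := fun i hi => by
    have : (i : ℕ) ≠ 0 := fun h => hi (Fin.ext h)
    exact hz i₁ i (Fin.le_def.2 (show 1 ≤ (i : ℕ) by omega))
  have hK : 0 < 4 * ((C : ℝ) - 1) ^ 2 := by
    have : (1 : ℝ) < C := by exact_mod_cast hC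
    nlinarith
  have hS := sum_exp_le_exp_add_card_mul hrest_le
  rw [Fintype.card_fin] at hS
  exact exp_div_mul_div_sq_lt hT0 (sum_pos (fun _ _ => exp_pos _) hbot)
    (sum_pos (fun _ _ => exp_pos _) ⟨i₀, mem_univ _⟩)
    (sum_exp_div_le_exp_mul_sum_exp hT0 hT1.le hbot_le) hS
    (single_le_sum (fun j _ => (exp_pos (z j / T)).le) (mem_univ i₀))
    (exp_add_mul_exp_sq_lt hT0.ne'
      (four_lt_mul_exp_of_lt hT0 hT1 ((le_max_left _ _).trans_lt hΔ))
      (lt_mul_exp_of_div_mul_log_lt hT0 (by linarith) hK ((le_max_right _ _).trans_lt hΔ)))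
end
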